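/- If p and q are distinct prime numbers, then the defect of the Fourier matrix F_{pq} equals 2(p−1)(q−1). -/

import Mathlib

/-- A complex Hadamard matrix: all entries of modulus one, and `H * Hᴴ = N • 1`. -/
def IsComplexHadamard {n : Type*} [Fintype n] [DecidableEq n] (H : Matrix n n ℂ) : Prop :=
  (∀ i j, ‖H i j‖ = 1) ∧
    H * H.conjTranspose = (Fintype.card n : ℂ) • (1 : Matrix n n ℂ)

/-- Dephased w.r.t. the distinguished index `i0`: all entries of the `i0`-th row
and column are equal to `1`. -/
def IsDephased {n : Type*} (H : Matrix n n ℂ) (i0 : n) : Prop :=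
  (∀ j, H i0 j = 1) ∧ (∀ i, H i i0 = 1)

/-- The solution space of the real linear system defining the defect of `H`:
`R` has vanishing first row (off the corner) and first column, and
`∑_k H_ik · conj(H_jk) · (R_ik − R_jk) = 0` for all `i < j`. -/
def defectSpace (N : ℕ) (hN : 0 < N) (H : Matrix (Fin N) (Fin N) ℂ) :
    Submodule ℝ (Matrix (Fin N) (Fin N) ℝ) where
  carrier := { R |
    (∀ j : Fin N, j ≠ ⟨0, hN⟩ → R ⟨0, hN⟩ j = 0) ∧
    (∀ i : Fin N, R i ⟨0, hN⟩ = 0) ∧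
    (∀ i j : Fin N, i < j →
      ∑ k : Fin N, H i k * (starRingEnd ℂ) (H j k) * (((R i k : ℝ) : ℂ) - ((R j k : ℝ) : ℂ)) = 0) }
  zero_mem' := by
    refine ⟨fun j _ => rfl, fun i => rfl, fun i j hij => ?_⟩
    simp
  add_mem' := by
    rintro R S ⟨hR1, hR2, hR3⟩ ⟨hS1, hS2, hS3⟩
    refine ⟨fun j hj => ?_, fun i => ?_, fun i j hij => ?_⟩
    · simp [Matrix.add_apply, hR1 j hj, hS1 j hj]
    · simp [Matrix.add_apply, hR2 i, hS2 i]
    · have key : ∀ k : Fin N,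
        H i k * (starRingEnd ℂ) (H j k) * ((((R + S) i k : ℝ) : ℂ) - (((R + S) j k : ℝ) : ℂ)) =
          H i k * (starRingEnd ℂ) (H j k) * (((R i k : ℝ) : ℂ) - ((R j k : ℝ) : ℂ)) +
          H i k * (starRingEnd ℂ) (H j k) * (((S i k : ℝ) : ℂ) - ((S j k : ℝ) : ℂ)) := by
        intro k
        simp only [Matrix.add_apply]
        push_cast
        ring
      rw [Finset.sum_congr rfl fun k _ => key k, Finset.sum_add_distrib,
        hR3 i j hij, hS3 i j hij, add_zero]
  smul_mem' := by
    rintro c R ⟨hR1, hR2, hR3⟩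
    refine ⟨fun j hj => ?_, fun i => ?_, fun i j hij => ?_⟩
    · simp [Matrix.smul_apply, hR1 j hj]
    · simp [Matrix.smul_apply, hR2 i]
    · have key : ∀ k : Fin N,
        H i k * (starRingEnd ℂ) (H j k) * ((((c • R) i k : ℝ) : ℂ) - (((c • R) j k : ℝ) : ℂ)) =
          (c : ℂ) * (H i k * (starRingEnd ℂ) (H j k) * (((R i k : ℝ) : ℂ) - ((R j k : ℝ) : ℂ))) := by
        intro k
        simp only [Matrix.smul_apply, smul_eq_mul]
        push_cast
        ring
      rw [Finset.sum_congr rfl fun k _ => key k, ← Finset.mul_sum, hR3 i j hij, mul_zero]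

/-- The defect of a complex Hadamard matrix: the dimension of `defectSpace`. -/
noncomputable def defect (N : ℕ) (hN : 0 < N) (H : Matrix (Fin N) (Fin N) ℂ) : ℕ :=
  Module.finrank ℝ (defectSpace N hN H)

/-- The (rescaled) Fourier matrix of order `N`, with entries `exp(2πi·j·k/N)`. -/
noncomputable def FourierMatrix (N : ℕ) : Matrix (Fin N) (Fin N) ℂ :=
  Matrix.of fun j k =>
    Complex.exp (2 * (Real.pi : ℂ) * Complex.I * ((j : ℕ) : ℂ) * ((k : ℕ) : ℂ) / (N : ℂ))

open Complex Finset

namespace FDP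

noncomputable def zeta (N : ℕ) : ℂ := Complex.exp (2 * Real.pi * Complex.I / N)

noncomputable def ee (N : ℕ) (x : ZMod N) : ℂ := zeta N ^ x.val

variable {N : ℕ} [NeZero N]

lemma zeta_prim : IsPrimitiveRoot (zeta N) N := Complex.isPrimitiveRoot_exp N (NeZero.ne N)

lemma zeta_pow_N : zeta N ^ N = 1 := zeta_prim.pow_eq_one

lemma zeta_pow_eq_one_iff (m : ℕ) : zeta N ^ m = 1 ↔ N ∣ m :=
  zeta_prim.pow_eq_one_iff_dvd m

lemma ee_natCast (n : ℕ) : ee N (n : ZMod N) = zeta N ^ n := by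
  unfold ee
  rw [ZMod.val_natCast, ← pow_eq_pow_mod n zeta_pow_N]

lemma ee_zero : ee N 0 = 1 := by
  have : ((0:ℕ) : ZMod N) = 0 := by norm_num
  rw [← this, ee_natCast, pow_zero]

lemma ee_add (x y : ZMod N) : ee N (x + y) = ee N x * ee N y := by
  have hx : ((x.val : ℕ) : ZMod N) = x := ZMod.natCast_rightInverse x
  have hy : ((y.val : ℕ) : ZMod N) = y := ZMod.natCast_rightInverse y
  have h : x + y = ((x.val + y.val : ℕ) : ZMod N) := by push_cast [hx, hy]; ring
  rw [h, ee_natCast, pow_add]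
  unfold ee
  rfl

lemma ee_nsmul (m : ℕ) (x : ZMod N) : ee N (m • x) = ee N x ^ m := by
  induction m with
  | zero => simpa using ee_zero
  | succ k ih => rw [succ_nsmul, ee_add, ih, pow_succ]

lemma ee_ne_zero (x : ZMod N) : ee N x ≠ 0 :=
  pow_ne_zero _ (Complex.exp_ne_zero _)

lemma ee_abs (x : ZMod N) : ‖ee N x‖ = 1 := by
  unfold ee zeta
  rw [norm_pow]
  have h : (2 * (Real.pi:ℂ) * Complex.I / N) = ((2 * Real.pi / N : ℝ) : ℂ) * Complex.I := by
    push_cast; ring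
  rw [h, Complex.norm_exp_ofReal_mul_I, one_pow]

lemma ee_neg (x : ZMod N) : ee N (-x) = (ee N x)⁻¹ := by
  refine eq_inv_of_mul_eq_one_left ?_
  rw [← ee_add, neg_add_cancel, ee_zero]

lemma conj_ee (x : ZMod N) : (starRingEnd ℂ) (ee N x) = ee N (-x) := by
  rw [ee_neg, ← Complex.inv_eq_conj]
  rw [ee_abs]

lemma ee_eq_one_iff (x : ZMod N) : ee N x = 1 ↔ x = 0 := by
  unfold ee
  rw [zeta_pow_eq_one_iff]
  constructor
  · intro h
    have h2 := Nat.eq_zero_of_dvd_of_lt h x.val_lt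
    · exact (ZMod.val_eq_zero x).mp h2
  · rintro rfl; simp

lemma geom_zero {w : ℂ} (hw : w ≠ 1) {n : ℕ} (hwn : w ^ n = 1) :
    ∑ a : Fin n, w ^ (a : ℕ) = 0 := by
  rw [Fin.sum_univ_eq_sum_range, geom_sum_eq hw, hwn, sub_self, zero_div]

lemma orth (d : ZMod N) : ∑ x : ZMod N, ee N (d * x) = if d = 0 then (N : ℂ) else 0 := by
  have key : ∀ x : ZMod N, ee N (d * x) = ee N d ^ x.val := by
    intro x
    rw [← ee_nsmul]
    congr 1
    rw [nsmul_eq_mul, ZMod.natCast_rightInverse x, mul_comm]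
  rw [Finset.sum_congr rfl fun x _ => key x]
  have bij : Function.Bijective (fun m : Fin N => ((m : ℕ) : ZMod N)) := by
    rw [Fintype.bijective_iff_injective_and_card]
    refine ⟨fun a b hab => ?_, by simp [ZMod.card]⟩
    have hab' : ((a : ℕ) : ZMod N) = ((b : ℕ) : ZMod N) := hab
    have : ((a : ℕ) : ZMod N).val = ((b : ℕ) : ZMod N).val := by rw [hab']
    rwa [ZMod.val_cast_of_lt a.isLt, ZMod.val_cast_of_lt b.isLt, ← Fin.ext_iff] at this
  rw [← Fintype.sum_bijective _ bij (fun m : Fin N => ee N d ^ (m : ℕ)) _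
    (fun m => by rw [ZMod.val_cast_of_lt m.isLt])]
  by_cases hd : d = 0
  · subst hd
    rw [if_pos rfl]
    simp [ee_zero]
  · rw [if_neg hd]
    refine geom_zero ?_ ?_
    · exact fun h => hd ((ee_eq_one_iff d).mp h)
    · rw [← ee_nsmul]
      have : (N : ℕ) • d = 0 := by
        rw [nsmul_eq_mul]
        simp
      rw [this, ee_zero]


lemma pi_inj {N : ℕ} {i j : Fin N} (h : ((i : ℕ) : ZMod N) = ((j : ℕ) : ZMod N)) : i = j := by
  haveI : NeZero N := ⟨Nat.ne_zero_of_lt i.isLt⟩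
  have h2 : ((i : ℕ) : ZMod N).val = ((j : ℕ) : ZMod N).val := by rw [h]
  rwa [ZMod.val_cast_of_lt i.isLt, ZMod.val_cast_of_lt j.isLt, ← Fin.ext_iff] at h2

/-- The key vanishing lemma: if the `p`-component of `d` is nonzero, then
the `d`-twisted sum of any function of `k mod q` vanishes. -/
lemma sum_vanish {p q N : ℕ} [NeZero p] [NeZero q] (hNpq : p * q = N)
    (d : ZMod N) (hd : ((d.val : ℕ) : ZMod p) ≠ 0) (g : ZMod q → ℂ) :
    ∑ k : Fin N, ee N (d * ((k : ℕ) : ZMod N)) * g ((k : ℕ) : ZMod q) = 0 := by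
  haveI : NeZero N := ⟨by rw [← hNpq]; exact Nat.mul_ne_zero (NeZero.ne p) (NeZero.ne q)⟩
  let e : Fin p × Fin q ≃ Fin N := finProdFinEquiv.trans (finCongr hNpq)
  have he : ∀ x : Fin p × Fin q, ((e x : Fin N) : ℕ) = (x.2 : ℕ) + q * (x.1 : ℕ) := by
    intro x
    show (((finCongr hNpq) (finProdFinEquiv x)) : ℕ) = _
    rw [finCongr_apply, Fin.coe_cast, finProdFinEquiv_apply_val]
  rw [← Equiv.sum_comp e]
  have key : ∀ x : Fin p × Fin q,
      ee N (d * ((e x : ℕ) : ZMod N)) * g ((e x : ℕ) : ZMod q)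
        = (ee N (d * ((q : ℕ) : ZMod N))) ^ (x.1 : ℕ) *
            (ee N (d * ((x.2 : ℕ) : ZMod N)) * g ((x.2 : ℕ) : ZMod q)) := by
    rintro ⟨a, b⟩
    rw [he ⟨a, b⟩]
    have h1 : (((b : ℕ) + q * (a : ℕ) : ℕ) : ZMod q) = ((b : ℕ) : ZMod q) := by
      push_cast
      simp
    have h2 : d * ((((b : ℕ) + q * (a : ℕ) : ℕ)) : ZMod N)
        = d * ((b : ℕ) : ZMod N) + (a : ℕ) • (d * ((q : ℕ) : ZMod N)) := by
      push_cast [nsmul_eq_mul]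
      ring
    rw [h1, h2, ee_add, ← ee_nsmul]
    ring_nf
  rw [Finset.sum_congr rfl fun x _ => key x]
  rw [Fintype.sum_prod_type]
  have hzero : ∑ a : Fin p, (ee N (d * ((q : ℕ) : ZMod N))) ^ (a : ℕ) = 0 := by
    refine geom_zero ?_ ?_
    · rw [Ne, ee_eq_one_iff]
      intro hk
      have hvq : ((d.val * q : ℕ) : ZMod N) = 0 := by
        push_cast [ZMod.natCast_val, ZMod.cast_id]
        exact hk
      rw [ZMod.natCast_eq_zero_iff] at hvq
      have hq0 : q ≠ 0 := NeZero.ne q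
      have hvq2 : p * q ∣ d.val * q := by rw [hNpq]; exact hvq
      have : p ∣ d.val :=
        (Nat.mul_dvd_mul_iff_right (Nat.pos_of_ne_zero hq0)).mp hvq2
      exact hd ((ZMod.natCast_eq_zero_iff d.val p).mpr this)
    · rw [← ee_nsmul]
      have : (p : ℕ) • (d * ((q : ℕ) : ZMod N)) = 0 := by
        rw [nsmul_eq_mul]
        have : ((p : ℕ) : ZMod N) * ((q : ℕ) : ZMod N) = 0 := by
          rw [← Nat.cast_mul, hNpq, ZMod.natCast_self]
        calc ((p : ℕ) : ZMod N) * (d * ((q : ℕ) : ZMod N))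
            = d * (((p : ℕ) : ZMod N) * ((q : ℕ) : ZMod N)) := by ring
          _ = 0 := by rw [this, mul_zero]
      rw [this, ee_zero]
  calc ∑ a : Fin p, ∑ b : Fin q, (ee N (d * ((q : ℕ) : ZMod N))) ^ (a : ℕ) *
          (ee N (d * ((b : ℕ) : ZMod N)) * g ((b : ℕ) : ZMod q))
      = (∑ a : Fin p, (ee N (d * ((q : ℕ) : ZMod N))) ^ (a : ℕ)) *
          (∑ b : Fin q, ee N (d * ((b : ℕ) : ZMod N)) * g ((b : ℕ) : ZMod q)) := by
        rw [Finset.sum_mul_sum]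
  _ = 0 := by rw [hzero, zero_mul]



section Gsection

variable {N : ℕ} [NeZero N]

def iota (x : ZMod N) : Fin N := ⟨x.val, x.val_lt⟩

lemma pi_iota (x : ZMod N) : (((iota x : Fin N) : ℕ) : ZMod N) = x := by
  simp [iota, ZMod.natCast_rightInverse x]

lemma iota_pi (k : Fin N) : iota (((k : ℕ) : ZMod N)) = k := by
  simp [iota, Fin.ext_iff, ZMod.val_cast_of_lt k.isLt]

/-- The row-wise Fourier transform of `R`. -/
noncomputable def Gf (N : ℕ) [NeZero N] (R : Matrix (Fin N) (Fin N) ℝ) (x d : ZMod N) : ℂ :=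
  ∑ k : Fin N, ee N (d * ((k : ℕ) : ZMod N)) * ((R (iota x) k : ℝ) : ℂ)

lemma H_factor (i j k : Fin N) :
    FourierMatrix N i k * (starRingEnd ℂ) (FourierMatrix N j k)
      = ee N ((((i : ℕ) : ZMod N) - ((j : ℕ) : ZMod N)) * ((k : ℕ) : ZMod N)) := by
  have hH : ∀ a b : Fin N, FourierMatrix N a b = ee N (((a : ℕ) : ZMod N) * ((b : ℕ) : ZMod N)) := by
    intro a b
    have : (((a : ℕ) : ZMod N) * ((b : ℕ) : ZMod N)) = (((a : ℕ) * (b : ℕ) : ℕ) : ZMod N) := by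
      push_cast; ring
    rw [this, ee_natCast]
    unfold FourierMatrix zeta
    rw [← Complex.exp_nat_mul]
    simp only [Matrix.of_apply]
    congr 1
    push_cast
    ring
  rw [hH, hH, conj_ee, ← ee_add]
  congr 1
  ring

variable (hN : 0 < N) {R : Matrix (Fin N) (Fin N) ℝ}
  (hR : R ∈ defectSpace N hN (FourierMatrix N))

include hR

lemma row0 (k : Fin N) : R ⟨0, hN⟩ k = 0 := by
  by_cases h : k = ⟨0, hN⟩
  · subst h; exact hR.2.1 _
  · exact hR.1 k h

lemma conj_Gf (x d : ZMod N) : (starRingEnd ℂ) (Gf N R x d) = Gf N R x (-d) := by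
  unfold Gf
  rw [map_sum]
  refine Finset.sum_congr rfl fun k _ => ?_
  rw [map_mul, conj_ee, Complex.conj_ofReal, neg_mul]

omit hR in
lemma defect_eq_Gf {i j : Fin N} (hij : i < j)
    (h : ∑ k : Fin N, FourierMatrix N i k * (starRingEnd ℂ) (FourierMatrix N j k) *
      (((R i k : ℝ) : ℂ) - ((R j k : ℝ) : ℂ)) = 0) :
    Gf N R (((i : ℕ) : ZMod N)) ((((i : ℕ) : ZMod N)) - (((j : ℕ) : ZMod N)))
      = Gf N R (((j : ℕ) : ZMod N)) ((((i : ℕ) : ZMod N)) - (((j : ℕ) : ZMod N))) := by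
  unfold Gf
  rw [iota_pi, iota_pi]
  have h2 : ∑ k : Fin N,
      (ee N (((((i : ℕ) : ZMod N)) - (((j : ℕ) : ZMod N))) * ((k : ℕ) : ZMod N)) * ((R i k : ℝ) : ℂ)
        - ee N (((((i : ℕ) : ZMod N)) - (((j : ℕ) : ZMod N))) * ((k : ℕ) : ZMod N)) * ((R j k : ℝ) : ℂ)) = 0 := by
    rw [← h]
    refine Finset.sum_congr rfl fun k _ => ?_
    rw [H_factor]
    ring
  rw [Finset.sum_sub_distrib] at h2
  exact sub_eq_zero.mp h2
-- end marker

include hN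

lemma pair_Gf {x y : ZMod N} (hxy : x ≠ y) :
    Gf N R x (x - y) = Gf N R y (x - y) := by
  have hij : iota x ≠ iota y := by
    intro h
    exact hxy (by rw [← pi_iota (N := N) x, ← pi_iota (N := N) y, h])
  have hpx : (((iota x : Fin N) : ℕ) : ZMod N) = x := pi_iota x
  have hpy : (((iota y : Fin N) : ℕ) : ZMod N) = y := pi_iota y
  rcases lt_or_gt_of_ne hij with hlt | hgt
  · have := defect_eq_Gf (R := R) hlt (hR.2.2 _ _ hlt)
    rwa [hpx, hpy] at this
  · have := defect_eq_Gf (R := R) hgt (hR.2.2 _ _ hgt)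
    rw [hpx, hpy] at this
    have hc := congrArg (starRingEnd ℂ) this.symm
    rwa [conj_Gf hN hR, conj_Gf hN hR, neg_sub] at hc

lemma chain_Gf (d : ZMod N) (x : ZMod N) (m : ℕ) :
    Gf N R x d = Gf N R (x + m • d) d := by
  induction m with
  | zero => simp
  | succ k ih =>
    rw [ih]
    by_cases h : x + (k+1) • d = x + k • d
    · rw [← h]
    · have step := pair_Gf hN hR (x := x + (k+1) • d) (y := x + k • d) h
      have hd : (x + (k+1) • d) - (x + k • d) = d := by
        rw [succ_nsmul]
        ring
      rw [hd] at step
      exact step.symm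

lemma coset_Gf {d x y : ZMod N} (h : ∃ m : ℕ, y = x + m • d) :
    Gf N R x d = Gf N R y d := by
  rcases h with ⟨m, rfl⟩
  exact chain_Gf hN hR d x m

lemma Gf_zero_row (d : ZMod N) : Gf N R 0 d = 0 := by
  unfold Gf
  have h0 : iota (0 : ZMod N) = ⟨0, hN⟩ := by
    simp [iota, Fin.ext_iff]
  rw [h0]
  refine Finset.sum_eq_zero fun k _ => ?_
  rw [row0 hN hR k]
  simp

lemma unit_Gf {d : ZMod N} (hd : IsUnit d) (x : ZMod N) : Gf N R x d = 0 := by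
  obtain ⟨u, hu⟩ := hd
  have : ∃ m : ℕ, (0 : ZMod N) = x + m • d := by
    refine ⟨((↑u⁻¹ * (-x)) : ZMod N).val, ?_⟩
    rw [nsmul_eq_mul, ZMod.natCast_rightInverse, ← hu]
    have h1 : ((u : ZMod N) * ((↑u⁻¹ : ZMod N) * (-x))) = -x := by
      rw [← mul_assoc, Units.mul_inv, one_mul]
    rw [mul_comm ((↑u⁻¹ : ZMod N) * (-x)), h1]
    ring
  rw [coset_Gf hN hR this]
  exact Gf_zero_row hN hR d

end Gsection

section CRT

variable {p q : ℕ} [NeZero p] [NeZero q]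

/-- The CRT map `ZMod (pq) → ZMod p × ZMod q`. -/
def chiHom (p q : ℕ) [NeZero p] [NeZero q] : ZMod (p * q) →+* ZMod p × ZMod q :=
  (ZMod.castHom (dvd_mul_right p q) (ZMod p)).prod (ZMod.castHom (dvd_mul_left q p) (ZMod q))

lemma chi_natCast (n : ℕ) : chiHom p q (n : ZMod (p * q)) = ((n : ZMod p), (n : ZMod q)) := by
  simp [chiHom, Prod.ext_iff]

lemma chi_val (d : ZMod (p * q)) :
    chiHom p q d = (((d.val : ℕ) : ZMod p), ((d.val : ℕ) : ZMod q)) := by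
  conv_lhs => rw [← ZMod.natCast_rightInverse d]
  rw [chi_natCast]

lemma chi_bij (hco : Nat.Coprime p q) : Function.Bijective (chiHom p q) := by
  rw [Fintype.bijective_iff_injective_and_card]
  constructor
  · rw [injective_iff_map_eq_zero]
    intro z hz
    rw [chi_val] at hz
    have h1 : ((z.val : ℕ) : ZMod p) = 0 := congrArg Prod.fst hz
    have h2 : ((z.val : ℕ) : ZMod q) = 0 := congrArg Prod.snd hz
    rw [ZMod.natCast_eq_zero_iff] at h1 h2
    have hdvd : p * q ∣ z.val := hco.mul_dvd_of_dvd_of_dvd h1 h2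
    have : z.val = 0 := Nat.eq_zero_of_dvd_of_lt hdvd z.val_lt
    exact (ZMod.val_eq_zero z).mp this
  · simp [ZMod.card]

/-- The CRT ring equivalence. -/
noncomputable def crtE (p q : ℕ) [NeZero p] [NeZero q] (hco : Nat.Coprime p q) :
    ZMod (p * q) ≃+* ZMod p × ZMod q :=
  RingEquiv.ofBijective (chiHom p q) (chi_bij hco)

lemma crtE_apply (hco : Nat.Coprime p q) (z : ZMod (p * q)) :
    crtE p q hco z = chiHom p q z := rfl

lemma crtE_symm_spec (hco : Nat.Coprime p q) (w : ZMod p × ZMod q) :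
    chiHom p q ((crtE p q hco).symm w) = w := by
  have := (crtE p q hco).apply_symm_apply w
  rwa [crtE_apply] at this

lemma isUnit_of_chi (hco : Nat.Coprime p q)
    [Fact p.Prime] [Fact q.Prime] {d : ZMod (p * q)}
    (h1 : (chiHom p q d).1 ≠ 0) (h2 : (chiHom p q d).2 ≠ 0) : IsUnit d := by
  have hu : IsUnit (chiHom p q d) := by
    rw [isUnit_iff_exists_inv]
    refine ⟨((chiHom p q d).1⁻¹, (chiHom p q d).2⁻¹), ?_⟩
    have : (chiHom p q d) * ((chiHom p q d).1⁻¹, (chiHom p q d).2⁻¹)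
        = ((chiHom p q d).1 * (chiHom p q d).1⁻¹, (chiHom p q d).2 * (chiHom p q d).2⁻¹) := rfl
    rw [this, mul_inv_cancel₀ h1, mul_inv_cancel₀ h2]
    rfl
  have := hu.map (crtE p q hco).symm.toRingHom
  have heq : (crtE p q hco).symm.toRingHom (chiHom p q d) = d := by
    show (crtE p q hco).symm (chiHom p q d) = d
    rw [← crtE_apply hco, RingEquiv.symm_apply_apply]
  rwa [heq] at this

lemma coset_exists (hco : Nat.Coprime p q) [Fact q.Prime] {d x y : ZMod (p * q)}
    (hd1 : (chiHom p q d).1 = 0) (hd2 : (chiHom p q d).2 ≠ 0)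
    (h1 : (chiHom p q x).1 = (chiHom p q y).1) : ∃ m : ℕ, y = x + m • d := by
  set b := (chiHom p q d).2 with hb
  refine ⟨((((chiHom p q y).2 - (chiHom p q x).2) * b⁻¹ : ZMod q)).val, ?_⟩
  have hinj := (chi_bij (p := p) (q := q) hco).1
  apply hinj
  have hmap : chiHom p q (x + (((chiHom p q y).2 - (chiHom p q x).2) * b⁻¹ : ZMod q).val • d)
      = chiHom p q x + ((((chiHom p q y).2 - (chiHom p q x).2) * b⁻¹ : ZMod q).val : ℕ) • chiHom p q d := by
    rw [map_add]
    congr 1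
    rw [nsmul_eq_mul, nsmul_eq_mul, map_mul, map_natCast]
  rw [hmap]
  symm
  ext
  · rw [Prod.fst_add, Prod.smul_fst, hd1, smul_zero, add_zero, h1]
  · rw [Prod.snd_add, Prod.smul_snd]
    rw [nsmul_eq_mul, ZMod.natCast_rightInverse, ← hb]
    field_simp
    ring

end CRT

section Glin

variable {N : ℕ} [NeZero N]

lemma Gf_add (R S : Matrix (Fin N) (Fin N) ℝ) (x d : ZMod N) :
    Gf N (R + S) x d = Gf N R x d + Gf N S x d := by
  unfold Gf
  rw [← Finset.sum_add_distrib]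
  refine Finset.sum_congr rfl fun k _ => ?_
  simp [Matrix.add_apply]
  ring

lemma Gf_smul (c : ℝ) (R : Matrix (Fin N) (Fin N) ℝ) (x d : ZMod N) :
    Gf N (c • R) x d = (c : ℂ) * Gf N R x d := by
  unfold Gf
  rw [Finset.mul_sum]
  refine Finset.sum_congr rfl fun k _ => ?_
  simp [Matrix.smul_apply]
  ring

end Glin

section Inversion

variable {N : ℕ} [NeZero N]

lemma pi_zero (hN : 0 < N) : (((⟨0, hN⟩ : Fin N) : ℕ) : ZMod N) = 0 := by
  norm_num

lemma inv_row (R : Matrix (Fin N) (Fin N) ℝ) (x : ZMod N) (k0 : Fin N)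
    (hall : ∀ d : ZMod N, Gf N R x d = 0) : R (iota x) k0 = 0 := by
  have h1 : ∑ d : ZMod N, ee N (- d * ((k0 : ℕ) : ZMod N)) * Gf N R x d = 0 := by
    refine Finset.sum_eq_zero fun d _ => ?_
    rw [hall d, mul_zero]
  have h2 : ∑ d : ZMod N, ee N (- d * ((k0 : ℕ) : ZMod N)) * Gf N R x d
      = ∑ k : Fin N, ((R (iota x) k : ℝ) : ℂ) *
          (if ((k : ℕ) : ZMod N) - ((k0 : ℕ) : ZMod N) = 0 then (N : ℂ) else 0) := by
    unfold Gf
    calc ∑ d : ZMod N, ee N (- d * ((k0 : ℕ) : ZMod N)) *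
            ∑ k : Fin N, ee N (d * ((k : ℕ) : ZMod N)) * ((R (iota x) k : ℝ) : ℂ)
        = ∑ d : ZMod N, ∑ k : Fin N,
            ee N ((((k : ℕ) : ZMod N) - ((k0 : ℕ) : ZMod N)) * d) * ((R (iota x) k : ℝ) : ℂ) := by
          refine Finset.sum_congr rfl fun d _ => ?_
          rw [Finset.mul_sum]
          refine Finset.sum_congr rfl fun k _ => ?_
          rw [← mul_assoc, ← ee_add]
          congr 2
          ring
      _ = ∑ k : Fin N, ∑ d : ZMod N,
            ee N ((((k : ℕ) : ZMod N) - ((k0 : ℕ) : ZMod N)) * d) * ((R (iota x) k : ℝ) : ℂ) :=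
          Finset.sum_comm
      _ = ∑ k : Fin N, ((R (iota x) k : ℝ) : ℂ) *
          (if ((k : ℕ) : ZMod N) - ((k0 : ℕ) : ZMod N) = 0 then (N : ℂ) else 0) := by
          refine Finset.sum_congr rfl fun k _ => ?_
          rw [← Finset.sum_mul, mul_comm, ← orth]
  rw [h2] at h1
  have h4 : ∑ k : Fin N, ((R (iota x) k : ℝ) : ℂ) *
      (if ((k : ℕ) : ZMod N) - ((k0 : ℕ) : ZMod N) = 0 then (N : ℂ) else 0)
      = ((R (iota x) k0 : ℝ) : ℂ) * (N : ℂ) := by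
    rw [Finset.sum_eq_single k0]
    · rw [sub_self, if_pos rfl]
    · intro k _ hk
      rw [if_neg, mul_zero]
      intro hzero
      exact hk (pi_inj (by rwa [sub_eq_zero] at hzero))
    · intro h; exact absurd (Finset.mem_univ k0) h
  rw [h4] at h1
  have hN0 : (N : ℂ) ≠ 0 := Nat.cast_ne_zero.mpr (NeZero.ne N)
  have : ((R (iota x) k0 : ℝ) : ℂ) = 0 := by
    rcases mul_eq_zero.mp h1 with h | h
    · exact h
    · exact absurd h hN0
  exact_mod_cast this

end Inversion

section CRT2

variable {p q : ℕ} [NeZero p] [NeZero q]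

lemma coset_exists' (hco : Nat.Coprime p q) [Fact p.Prime] {d x y : ZMod (p * q)}
    (hd2 : (chiHom p q d).2 = 0) (hd1 : (chiHom p q d).1 ≠ 0)
    (h2 : (chiHom p q x).2 = (chiHom p q y).2) : ∃ m : ℕ, y = x + m • d := by
  set b := (chiHom p q d).1 with hb
  refine ⟨((((chiHom p q y).1 - (chiHom p q x).1) * b⁻¹ : ZMod p)).val, ?_⟩
  have hinj := (chi_bij (p := p) (q := q) hco).1
  apply hinj
  have hmap : chiHom p q (x + (((chiHom p q y).1 - (chiHom p q x).1) * b⁻¹ : ZMod p).val • d)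
      = chiHom p q x + ((((chiHom p q y).1 - (chiHom p q x).1) * b⁻¹ : ZMod p).val : ℕ) • chiHom p q d := by
    rw [map_add]
    congr 1
    rw [nsmul_eq_mul, nsmul_eq_mul, map_mul, map_natCast]
  rw [hmap]
  symm
  ext
  · rw [Prod.fst_add, Prod.smul_fst]
    rw [nsmul_eq_mul, ZMod.natCast_rightInverse, ← hb]
    field_simp
    ring
  · rw [Prod.snd_add, Prod.smul_snd, hd2, smul_zero, add_zero, h2]

end CRT2

section AllG

variable {p q : ℕ} [NeZero p] [NeZero q] [Fact p.Prime] [Fact q.Prime]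
  (hco : Nat.Coprime p q)
  (hN : 0 < p * q) {R : Matrix (Fin (p * q)) (Fin (p * q)) ℝ}
  (hR : R ∈ defectSpace (p * q) hN (FourierMatrix (p * q)))

include hco hN hR

lemma allG
    (hPQ : ∀ (a : ZMod p) (b : ZMod q), a ≠ 0 → b ≠ 0 →
      Gf (p * q) R ((crtE p q hco).symm (a, 0)) ((crtE p q hco).symm (0, b)) = 0)
    (hQP : ∀ (b : ZMod q) (a : ZMod p), b ≠ 0 → a ≠ 0 →
      Gf (p * q) R ((crtE p q hco).symm (0, b)) ((crtE p q hco).symm (a, 0)) = 0) :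
    ∀ (x d : ZMod (p * q)), Gf (p * q) R x d = 0 := by
  have hps : ∀ z : ZMod (p * q), (crtE p q hco).symm (chiHom p q z) = z := by
    intro z
    rw [← crtE_apply hco, RingEquiv.symm_apply_apply]
  have hne : ∀ d : ZMod (p * q), d ≠ 0 → ∀ x, Gf (p * q) R x d = 0 := by
    intro d hd x
    by_cases hd1 : (chiHom p q d).1 = 0
    · have hd2 : (chiHom p q d).2 ≠ 0 := by
        intro h2
        apply hd
        have : chiHom p q d = chiHom p q 0 := by
          rw [map_zero]
          exact Prod.ext hd1 h2
        exact (chi_bij hco).1 this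
      -- reduce x to (x1, 0)
      set x' : ZMod (p * q) := (crtE p q hco).symm ((chiHom p q x).1, 0) with hx'
      have hchx' : chiHom p q x' = ((chiHom p q x).1, 0) := crtE_symm_spec hco _
      have hstep : ∃ m : ℕ, x = x' + m • d := by
        refine coset_exists hco hd1 hd2 ?_
        rw [hchx']
      have heq : Gf (p * q) R x' d = Gf (p * q) R x d := coset_Gf hN hR hstep
      rw [← heq]
      by_cases hx1 : (chiHom p q x).1 = 0
      · have : x' = 0 := by
          rw [hx', hx1]
          have : ((0 : ZMod p), (0 : ZMod q)) = chiHom p q 0 := by rw [map_zero]; rfl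
          rw [this, hps]
        rw [this]
        exact Gf_zero_row hN hR d
      · have hdform : d = (crtE p q hco).symm (0, (chiHom p q d).2) := by
          have hpair : ((0 : ZMod p), (chiHom p q d).2) = chiHom p q d := by
            rw [Prod.ext_iff]
            exact ⟨hd1.symm, rfl⟩
          rw [hpair, hps]
        rw [hdform]
        exact hPQ _ _ hx1 hd2
    · by_cases hd2 : (chiHom p q d).2 = 0
      · -- symmetric case
        set x' : ZMod (p * q) := (crtE p q hco).symm (0, (chiHom p q x).2) with hx'
        have hchx' : chiHom p q x' = (0, (chiHom p q x).2) := crtE_symm_spec hco _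
        have hstep : ∃ m : ℕ, x = x' + m • d := by
          refine coset_exists' hco hd2 hd1 ?_
          rw [hchx']
        have heq : Gf (p * q) R x' d = Gf (p * q) R x d := coset_Gf hN hR hstep
        rw [← heq]
        by_cases hx2 : (chiHom p q x).2 = 0
        · have : x' = 0 := by
            rw [hx', hx2]
            have : ((0 : ZMod p), (0 : ZMod q)) = chiHom p q 0 := by rw [map_zero]; rfl
            rw [this, hps]
          rw [this]
          exact Gf_zero_row hN hR d
        · have hdform : d = (crtE p q hco).symm ((chiHom p q d).1, 0) := by
            have hpair : ((chiHom p q d).1, (0 : ZMod q)) = chiHom p q d := by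
              rw [Prod.ext_iff]
              exact ⟨rfl, hd2.symm⟩
            rw [hpair, hps]
          rw [hdform]
          exact hQP _ _ hx2 hd1
      · exact unit_Gf hN hR (isUnit_of_chi hco hd1 hd2) x
  intro x d
  by_cases hd : d = 0
  · subst hd
    have hsum : ∑ d : ZMod (p * q), Gf (p * q) R x d
        = ((R (iota x) ⟨0, hN⟩ : ℝ) : ℂ) * ((p * q : ℕ) : ℂ) := by
      unfold Gf
      rw [Finset.sum_comm]
      have mid : ∀ k : Fin (p * q),
          (∑ d : ZMod (p*q), ee (p*q) (d * ((k : ℕ) : ZMod (p*q))) * ((R (iota x) k : ℝ) : ℂ))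
          = ((R (iota x) k : ℝ) : ℂ) *
              (if ((k : ℕ) : ZMod (p*q)) = 0 then ((p*q : ℕ) : ℂ) else 0) := by
        intro k
        rw [← Finset.sum_mul, mul_comm]
        congr 1
        rw [← orth]
        refine Finset.sum_congr rfl fun d _ => ?_
        exact congrArg (ee (p * q)) (mul_comm d _)
      rw [Finset.sum_congr rfl fun k _ => mid k]
      rw [Finset.sum_eq_single (⟨0, hN⟩ : Fin (p * q))]
      · rw [if_pos (pi_zero hN)]
      · intro k _ hk
        rw [if_neg, mul_zero]
        intro h0
        exact hk (pi_inj (by rw [h0, pi_zero hN]))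
      · intro h; exact absurd (Finset.mem_univ _) h
    have hcol : R (iota x) ⟨0, hN⟩ = 0 := hR.2.1 _
    rw [hcol] at hsum
    norm_num at hsum
    have hsum2 : ∑ d : ZMod (p * q), Gf (p * q) R x d = Gf (p * q) R x 0 := by
      rw [Finset.sum_eq_single (0 : ZMod (p * q))]
      · intro d _ hd; exact hne d hd x
      · intro h; exact absurd (Finset.mem_univ _) h
    rw [hsum2] at hsum
    exact hsum
  · exact hne d hd x

end AllG

section Upper

variable (p q : ℕ) [NeZero p] [NeZero q]

/-- The injection witnessing the upper bound for the defect. -/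
noncomputable def PsiMap (hco : Nat.Coprime p q) (hN : 0 < p * q) :
    ↥(defectSpace (p * q) hN (FourierMatrix (p * q))) →ₗ[ℝ]
      (({a : ZMod p // a ≠ 0} → {b : ZMod q // b ≠ 0} → ℝ) ×
        ({b : ZMod q // b ≠ 0} → {a : ZMod p // a ≠ 0} → ℝ)) where
  toFun R :=
    (fun a b => (Gf (p * q) R.1 ((crtE p q hco).symm (a.1, 0)) ((crtE p q hco).symm (0, b.1))).re
        + (Gf (p * q) R.1 ((crtE p q hco).symm (a.1, 0)) ((crtE p q hco).symm (0, b.1))).im,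
     fun b a => (Gf (p * q) R.1 ((crtE p q hco).symm (0, b.1)) ((crtE p q hco).symm (a.1, 0))).re
        + (Gf (p * q) R.1 ((crtE p q hco).symm (0, b.1)) ((crtE p q hco).symm (a.1, 0))).im)
  map_add' R S := by
    have h : ((R + S : ↥(defectSpace (p * q) hN (FourierMatrix (p * q)))) :
        Matrix (Fin (p*q)) (Fin (p*q)) ℝ) = ↑R + ↑S := rfl
    refine Prod.ext ?_ ?_ <;> funext a b <;>
      simp only [h, Gf_add, Complex.add_re, Complex.add_im, Prod.fst_add, Prod.snd_add,
        Pi.add_apply] <;> ring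
  map_smul' c R := by
    have h : ((c • R : ↥(defectSpace (p * q) hN (FourierMatrix (p * q)))) :
        Matrix (Fin (p*q)) (Fin (p*q)) ℝ) = c • (R : Matrix (Fin (p*q)) (Fin (p*q)) ℝ) := rfl
    refine Prod.ext ?_ ?_ <;> funext a b <;>
      simp only [h, Gf_smul, Complex.mul_re, Complex.mul_im, Complex.ofReal_re,
        Complex.ofReal_im, RingHom.id_apply, Prod.smul_fst, Prod.smul_snd, Pi.smul_apply,
        smul_eq_mul] <;> ring

variable [Fact p.Prime] [Fact q.Prime]

lemma Psi_inj (hco : Nat.Coprime p q) (hN : 0 < p * q) :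
    Function.Injective (PsiMap p q hco hN) := by
  rw [injective_iff_map_eq_zero]
  intro R hR0
  have hmem := R.2
  have h1 := congrArg Prod.fst hR0
  have h2 := congrArg Prod.snd hR0
  -- conj trick
  have hPQ : ∀ (a : ZMod p) (b : ZMod q), a ≠ 0 → b ≠ 0 →
      Gf (p * q) R.1 ((crtE p q hco).symm (a, 0)) ((crtE p q hco).symm (0, b)) = 0 := by
    intro a b ha hb
    have e1 := congrFun (congrFun h1 ⟨a, ha⟩) ⟨b, hb⟩
    have e2 := congrFun (congrFun h1 ⟨a, ha⟩) ⟨-b, neg_ne_zero.mpr hb⟩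
    simp only [PsiMap, LinearMap.coe_mk, AddHom.coe_mk, Prod.fst_zero, Pi.zero_apply] at e1 e2
    have hneg : (crtE p q hco).symm (0, -b) = -((crtE p q hco).symm (0, b)) := by
      have : ((0 : ZMod p), -b) = -((0 : ZMod p), b) := by
        rw [Prod.ext_iff]; constructor <;> simp
      rw [this, map_neg]
    rw [hneg] at e2
    have hconj : Gf (p * q) R.1 ((crtE p q hco).symm (a, 0)) (-((crtE p q hco).symm (0, b)))
        = (starRingEnd ℂ) (Gf (p * q) R.1 ((crtE p q hco).symm (a, 0)) ((crtE p q hco).symm (0, b))) :=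
      (conj_Gf hN hmem _ _).symm
    rw [hconj, Complex.conj_re, Complex.conj_im] at e2
    apply Complex.ext <;> simp only [Complex.zero_re, Complex.zero_im] <;> linarith
  have hQP : ∀ (b : ZMod q) (a : ZMod p), b ≠ 0 → a ≠ 0 →
      Gf (p * q) R.1 ((crtE p q hco).symm (0, b)) ((crtE p q hco).symm (a, 0)) = 0 := by
    intro b a hb ha
    have e1 := congrFun (congrFun h2 ⟨b, hb⟩) ⟨a, ha⟩
    have e2 := congrFun (congrFun h2 ⟨b, hb⟩) ⟨-a, neg_ne_zero.mpr ha⟩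
    simp only [PsiMap, LinearMap.coe_mk, AddHom.coe_mk, Prod.snd_zero, Pi.zero_apply] at e1 e2
    have hneg : (crtE p q hco).symm (-a, 0) = -((crtE p q hco).symm (a, 0)) := by
      have : ((-a : ZMod p), (0 : ZMod q)) = -((a : ZMod p), (0 : ZMod q)) := by
        rw [Prod.ext_iff]; constructor <;> simp
      rw [this, map_neg]
    rw [hneg] at e2
    have hconj : Gf (p * q) R.1 ((crtE p q hco).symm (0, b)) (-((crtE p q hco).symm (a, 0)))
        = (starRingEnd ℂ) (Gf (p * q) R.1 ((crtE p q hco).symm (0, b)) ((crtE p q hco).symm (a, 0))) :=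
      (conj_Gf hN hmem _ _).symm
    rw [hconj, Complex.conj_re, Complex.conj_im] at e2
    apply Complex.ext <;> simp only [Complex.zero_re, Complex.zero_im] <;> linarith
  have hall := allG hco hN hmem hPQ hQP
  have hzero : (R : Matrix (Fin (p * q)) (Fin (p * q)) ℝ) = 0 := by
    ext i k
    have := inv_row (R : Matrix (Fin (p * q)) (Fin (p * q)) ℝ) (((i : ℕ) : ZMod (p * q))) k
      (fun d => hall _ d)
    rwa [iota_pi] at this
  exact Subtype.ext hzero

end Upper

section Lower

variable {p q : ℕ}

/-- Extension by zero of a function defined on nonzero residues. -/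
def extF (α : {a : ZMod p // a ≠ 0} → {b : ZMod q // b ≠ 0} → ℝ)
    (x : ZMod p) (y : ZMod q) : ℝ :=
  if hx : x = 0 then 0 else if hy : y = 0 then 0 else α ⟨x, hx⟩ ⟨y, hy⟩

lemma extF_add (α β : {a : ZMod p // a ≠ 0} → {b : ZMod q // b ≠ 0} → ℝ) (x y) :
    extF (α + β) x y = extF α x y + extF β x y := by
  unfold extF
  split_ifs <;> simp

lemma extF_smul (c : ℝ) (α : {a : ZMod p // a ≠ 0} → {b : ZMod q // b ≠ 0} → ℝ) (x y) :
    extF (c • α) x y = c * extF α x y := by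
  unfold extF
  split_ifs <;> simp

lemma extF_x0 (α : {a : ZMod p // a ≠ 0} → {b : ZMod q // b ≠ 0} → ℝ) (y) :
    extF α 0 y = 0 := dif_pos rfl

lemma extF_y0 (α : {a : ZMod p // a ≠ 0} → {b : ZMod q // b ≠ 0} → ℝ) (x) :
    extF α x 0 = 0 := by
  unfold extF
  split_ifs with h1 h2
  · rfl
  · rfl
  · exact absurd rfl h2

lemma extF_ne (α : {a : ZMod p // a ≠ 0} → {b : ZMod q // b ≠ 0} → ℝ) {x y}
    (hx : x ≠ 0) (hy : y ≠ 0) : extF α x y = α ⟨x, hx⟩ ⟨y, hy⟩ := by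
  unfold extF
  rw [dif_neg hx, dif_neg hy]

variable (p q) [NeZero p] [NeZero q]

/-- The parametrization map witnessing the lower bound for the defect. -/
def PhiMap :
    (({a : ZMod p // a ≠ 0} → {b : ZMod q // b ≠ 0} → ℝ) ×
      ({b : ZMod q // b ≠ 0} → {a : ZMod p // a ≠ 0} → ℝ)) →ₗ[ℝ]
        Matrix (Fin (p * q)) (Fin (p * q)) ℝ where
  toFun w := Matrix.of fun i k =>
    extF w.1 ((i : ℕ) : ZMod p) ((k : ℕ) : ZMod q)
      + extF w.2 ((i : ℕ) : ZMod q) ((k : ℕ) : ZMod p)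
  map_add' w v := by
    ext i k
    simp only [Matrix.of_apply, Matrix.add_apply, Prod.fst_add, Prod.snd_add, extF_add]
    ring
  map_smul' c w := by
    ext i k
    simp only [Matrix.of_apply, Matrix.smul_apply, Prod.smul_fst, Prod.smul_snd, extF_smul,
      RingHom.id_apply, smul_eq_mul]
    ring

lemma chi1_pi (i : Fin (p * q)) :
    (chiHom p q (((i : ℕ) : ZMod (p * q)))).1 = ((i : ℕ) : ZMod p) := by
  rw [chi_natCast]

lemma chi2_pi (i : Fin (p * q)) :
    (chiHom p q (((i : ℕ) : ZMod (p * q)))).2 = ((i : ℕ) : ZMod q) := by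
  rw [chi_natCast]

lemma Phi_mem (hN : 0 < p * q)
    (w : ({a : ZMod p // a ≠ 0} → {b : ZMod q // b ≠ 0} → ℝ) ×
      ({b : ZMod q // b ≠ 0} → {a : ZMod p // a ≠ 0} → ℝ)) :
    PhiMap p q w ∈ defectSpace (p * q) hN (FourierMatrix (p * q)) := by
  set R := PhiMap p q w with hRdef
  have hRentry : ∀ i k : Fin (p * q), R i k =
      extF w.1 ((i : ℕ) : ZMod p) ((k : ℕ) : ZMod q)
        + extF w.2 ((i : ℕ) : ZMod q) ((k : ℕ) : ZMod p) := fun i k => rfl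
  refine ⟨?_, ?_, ?_⟩
  · intro j _
    rw [hRentry]
    norm_num [extF_x0]
  · intro i
    rw [hRentry]
    norm_num [extF_y0]
  · intro i j hij
    set δ : ZMod (p * q) := ((i : ℕ) : ZMod (p * q)) - ((j : ℕ) : ZMod (p * q)) with hδ
    have hsummand : ∀ k : Fin (p * q),
        FourierMatrix (p * q) i k * (starRingEnd ℂ) (FourierMatrix (p * q) j k) *
          (((R i k : ℝ) : ℂ) - ((R j k : ℝ) : ℂ))
        = ee (p * q) (δ * ((k : ℕ) : ZMod (p * q))) *
            (((extF w.1 ((i : ℕ) : ZMod p) ((k : ℕ) : ZMod q) : ℝ) : ℂ)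
              - ((extF w.1 ((j : ℕ) : ZMod p) ((k : ℕ) : ZMod q) : ℝ) : ℂ))
          + ee (p * q) (δ * ((k : ℕ) : ZMod (p * q))) *
            (((extF w.2 ((i : ℕ) : ZMod q) ((k : ℕ) : ZMod p) : ℝ) : ℂ)
              - ((extF w.2 ((j : ℕ) : ZMod q) ((k : ℕ) : ZMod p) : ℝ) : ℂ)) := by
      intro k
      rw [H_factor, hRentry, hRentry, ← hδ]
      push_cast
      ring
    rw [Finset.sum_congr rfl fun k _ => hsummand k, Finset.sum_add_distrib]
    have hA : ∑ k : Fin (p * q), ee (p * q) (δ * ((k : ℕ) : ZMod (p * q))) *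
        (((extF w.1 ((i : ℕ) : ZMod p) ((k : ℕ) : ZMod q) : ℝ) : ℂ)
          - ((extF w.1 ((j : ℕ) : ZMod p) ((k : ℕ) : ZMod q) : ℝ) : ℂ)) = 0 := by
      by_cases hp' : ((i : ℕ) : ZMod p) = ((j : ℕ) : ZMod p)
      · refine Finset.sum_eq_zero fun k _ => ?_
        rw [hp', sub_self, mul_zero]
      · refine sum_vanish rfl δ ?_
          (fun r => ((extF w.1 ((i : ℕ) : ZMod p) r : ℝ) : ℂ)
            - ((extF w.1 ((j : ℕ) : ZMod p) r : ℝ) : ℂ))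
        have : ((δ.val : ℕ) : ZMod p) = (chiHom p q δ).1 := by rw [chi_val]
        rw [this, hδ, map_sub, Prod.fst_sub, chi1_pi, chi1_pi]
        exact sub_ne_zero.mpr hp'
    have hB : ∑ k : Fin (p * q), ee (p * q) (δ * ((k : ℕ) : ZMod (p * q))) *
        (((extF w.2 ((i : ℕ) : ZMod q) ((k : ℕ) : ZMod p) : ℝ) : ℂ)
          - ((extF w.2 ((j : ℕ) : ZMod q) ((k : ℕ) : ZMod p) : ℝ) : ℂ)) = 0 := by
      by_cases hq' : ((i : ℕ) : ZMod q) = ((j : ℕ) : ZMod q)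
      · refine Finset.sum_eq_zero fun k _ => ?_
        rw [hq', sub_self, mul_zero]
      · refine sum_vanish (mul_comm q p) δ ?_
          (fun r => ((extF w.2 ((i : ℕ) : ZMod q) r : ℝ) : ℂ)
            - ((extF w.2 ((j : ℕ) : ZMod q) r : ℝ) : ℂ))
        have : ((δ.val : ℕ) : ZMod q) = (chiHom p q δ).2 := by rw [chi_val]
        rw [this, hδ, map_sub, Prod.snd_sub, chi2_pi, chi2_pi]
        exact sub_ne_zero.mpr hq'
    rw [hA, hB, add_zero]

lemma Phi_inj (hco : Nat.Coprime p q) : Function.Injective (PhiMap p q) := by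
  rw [injective_iff_map_eq_zero]
  intro w hw
  have hentry : ∀ i k : Fin (p * q),
      extF w.1 ((i : ℕ) : ZMod p) ((k : ℕ) : ZMod q)
        + extF w.2 ((i : ℕ) : ZMod q) ((k : ℕ) : ZMod p) = 0 := by
    intro i k
    have := congrFun (congrFun (congrArg (fun M => (M : Matrix _ _ ℝ)) hw) i) k
    simpa [PhiMap] using this
  have hc : ∀ (a : ZMod p) (b : ZMod q), ∃ i : Fin (p * q),
      ((i : ℕ) : ZMod p) = a ∧ ((i : ℕ) : ZMod q) = b := by
    intro a b
    refine ⟨iota ((crtE p q hco).symm (a, b)), ?_, ?_⟩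
    · have h1 : (((iota ((crtE p q hco).symm (a, b)) : Fin (p * q)) : ℕ) : ZMod p)
          = (chiHom p q ((crtE p q hco).symm (a, b))).1 := by
        rw [chi_val]; rfl
      rw [h1, crtE_symm_spec]
    · have h1 : (((iota ((crtE p q hco).symm (a, b)) : Fin (p * q)) : ℕ) : ZMod q)
          = (chiHom p q ((crtE p q hco).symm (a, b))).2 := by
        rw [chi_val]; rfl
      rw [h1, crtE_symm_spec]
  refine Prod.ext ?_ ?_
  · funext a b
    obtain ⟨i, hi1, hi2⟩ := hc a.1 0
    obtain ⟨k, hk1, hk2⟩ := hc 0 b.1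
    have := hentry i k
    rw [hi1, hi2, hk1, hk2, extF_ne w.1 a.2 b.2, extF_y0, add_zero] at this
    have h2 : (⟨a.1, a.2⟩ : {a : ZMod p // a ≠ 0}) = a := rfl
    have h3 : (⟨b.1, b.2⟩ : {b : ZMod q // b ≠ 0}) = b := rfl
    rw [h2, h3] at this
    exact this
  · funext b a
    obtain ⟨i, hi1, hi2⟩ := hc 0 b.1
    obtain ⟨k, hk1, hk2⟩ := hc a.1 0
    have := hentry i k
    rw [hi1, hi2, hk1, hk2, extF_ne w.2 b.2 a.2, extF_x0, zero_add] at this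
    have h2 : (⟨a.1, a.2⟩ : {a : ZMod p // a ≠ 0}) = a := rfl
    have h3 : (⟨b.1, b.2⟩ : {b : ZMod q // b ≠ 0}) = b := rfl
    rw [h2, h3] at this
    exact this

end Lower

section Dim

lemma card_nz (p : ℕ) [NeZero p] : Fintype.card {a : ZMod p // a ≠ 0} = p - 1 := by
  have h := Fintype.card_subtype_compl (fun a : ZMod p => a = 0)
  rw [Fintype.card_subtype_eq (0 : ZMod p), ZMod.card] at h
  exact h

lemma finrank_ff (ι κ : Type*) [Fintype ι] [Fintype κ] :
    Module.finrank ℝ (ι → κ → ℝ) = Fintype.card ι * Fintype.card κ := by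
  rw [Module.finrank_pi_fintype ℝ]
  simp [Module.finrank_pi]

end Dim

end FDP

open FDP

/-- For distinct primes `p` and `q`, the defect of the Fourier matrix
`F_{pq}` equals `2(p−1)(q−1)`. -/
theorem fourier_defect_of_distinct_primes (p q : ℕ) (hp : p.Prime) (hq : q.Prime)
    (hpq : p ≠ q) :
    defect (p * q) (Nat.mul_pos hp.pos hq.pos) (FourierMatrix (p * q)) =
      2 * (p - 1) * (q - 1) := by
  haveI : Fact p.Prime := ⟨hp⟩
  haveI : Fact q.Prime := ⟨hq⟩
  haveI : NeZero p := ⟨hp.pos.ne'⟩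
  haveI : NeZero q := ⟨hq.pos.ne'⟩
  have hco : Nat.Coprime p q := (Nat.coprime_primes hp hq).mpr hpq
  have hN : 0 < p * q := Nat.mul_pos hp.pos hq.pos
  unfold defect
  have htarget : Module.finrank ℝ
      (({a : ZMod p // a ≠ 0} → {b : ZMod q // b ≠ 0} → ℝ) ×
        ({b : ZMod q // b ≠ 0} → {a : ZMod p // a ≠ 0} → ℝ))
      = (p - 1) * (q - 1) + (q - 1) * (p - 1) := by
    rw [Module.finrank_prod, finrank_ff, finrank_ff, card_nz, card_nz]
  have hupper : Module.finrank ℝ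
      ↥(defectSpace (p * q) (Nat.mul_pos hp.pos hq.pos) (FourierMatrix (p * q)))
      ≤ (p - 1) * (q - 1) + (q - 1) * (p - 1) := by
    rw [← htarget]
    exact LinearMap.finrank_le_finrank_of_injective
      (Psi_inj p q hco (Nat.mul_pos hp.pos hq.pos))
  have hlower : (p - 1) * (q - 1) + (q - 1) * (p - 1)
      ≤ Module.finrank ℝ
        ↥(defectSpace (p * q) (Nat.mul_pos hp.pos hq.pos) (FourierMatrix (p * q))) := by
    have hle : LinearMap.range (PhiMap p q)
        ≤ defectSpace (p * q) (Nat.mul_pos hp.pos hq.pos) (FourierMatrix (p * q)) := by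
      rintro _ ⟨w, rfl⟩
      exact Phi_mem p q (Nat.mul_pos hp.pos hq.pos) w
    have h2 := LinearMap.finrank_range_of_inj (Phi_inj p q hco)
    have h3 := Submodule.finrank_mono hle
    rw [h2, htarget] at h3
    exact h3
  have harith : (p - 1) * (q - 1) + (q - 1) * (p - 1) = 2 * (p - 1) * (q - 1) := by ring
  omega
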